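/- Let p be a prime and ε ∈ {1, −1}. Then for every m with 1 ≤ m ≤ p − 1, the value S(ε + p·m, p²) equals ε·(2/p² − 2). -/

import Mathlib

open scoped Classical
open Finset

/-- The sawtooth function `((x))`. -/
noncomputable def saw (x : ℝ) : ℝ :=
  if ∃ z : ℤ, (z : ℝ) = x then 0 else x - ⌊x⌋ - 1/2

/-- The classical Dedekind sum `s(m,n)`. -/
noncomputable def ded (m n : ℤ) : ℝ :=
  ∑ k ∈ Finset.Icc (1 : ℤ) n, saw ((k : ℝ) / n) * saw ((m : ℝ) * k / n)

/-- The normalized Dedekind sum `S(m,n) = 12 s(m,n)`. -/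
noncomputable def Sded (m n : ℤ) : ℝ := 12 * ded m n

/-! For `h` prime to `n > 0`, `s(h, n) = n⁻² ∑_{0 ≤ j < n} j · (h j mod n) - (n - 1) / 4`: away
from `j = 0` the terms are `(j/n - 1/2)((h j mod n)/n - 1/2)`, and `j ↦ h j mod n` permutes the
residues. For `n = p²`, `h = 1 + p m` write `j = a + p b` with `0 ≤ a, b < p`; then
`h j mod p² = a + p ((m a + b) mod p)`. Both `b ↦ (m a + b) mod p` and, as `p ∤ m`,
`a ↦ (m a + b) mod p` permute the residues mod `p`, so the double sum reduces to `∑ a` and `∑ a²`,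
and `s(1 + p m, p²) = (1 - p²) / (6 p²)`. The case `ε = -1` follows since `s(-h, n) = -s(h, n)`
and `s(h, n)` is `n`-periodic in `h`. -/

lemma saw_eq (x : ℝ) : saw x = if Int.fract x = 0 then 0 else Int.fract x - 1 / 2 := by
  rw [saw, Int.self_sub_floor]
  simp only [Int.fract_eq_zero_iff, Set.mem_range]

lemma saw_intCast (k : ℤ) : saw k = 0 := by
  simp [saw_eq]

lemma saw_zero : saw 0 = 0 := by
  simpa using saw_intCast 0

lemma saw_add_intCast (x : ℝ) (k : ℤ) : saw (x + k) = saw x := by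
  simp only [saw_eq, Int.fract_add_intCast]

lemma saw_neg (x : ℝ) : saw (-x) = -saw x := by
  by_cases hx : Int.fract x = 0
  · simp [saw_eq, hx, Int.fract_neg_eq_zero]
  have hx' : 1 - Int.fract x ≠ 0 := by linarith [Int.fract_lt_one x]
  rw [saw_eq, saw_eq, Int.fract_neg hx, if_neg hx', if_neg hx]
  ring

lemma saw_intCast_div {n : ℤ} (hn : 0 < n) (j : ℤ) :
    saw (j / n) = if j % n = 0 then 0 else ((j % n : ℤ) : ℝ) / n - 1 / 2 := by
  lift n to ℕ using hn.le
  have hn' : (0 : ℝ) < n := by exact_mod_cast hn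
  simp only [saw_eq, Int.cast_natCast, Int.fract_div_intCast_eq_div_intCast_mod, div_eq_zero_iff,
    Int.cast_eq_zero, hn'.ne', or_false]

lemma ded_eq_sum_Ico (m n : ℤ) :
    ded m n = ∑ k ∈ Ico 0 n, saw (k / n) * saw (m * k / n) := by
  rcases le_or_gt n 0 with hn | hn
  · simp [ded, Finset.Icc_eq_empty_of_lt (by omega : n < 1), Finset.Ico_eq_empty_of_le hn]
  set f : ℤ → ℝ := fun k => saw (k / n) * saw (m * k / n)
  have hzero : f 0 = 0 := by simp [f, saw_zero]
  have htop : f n = 0 := by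
    simp only [f]
    rw [div_self (by positivity), ← Int.cast_one, saw_intCast, zero_mul]
  have hIcc : Icc 1 n = Ioc 0 n := by simpa using Finset.Icc_add_one_left_eq_Ioc (0 : ℤ) n
  rw [ded, hIcc, ← zero_add (∑ k ∈ Ioc 0 n, f k), ← hzero,
    Finset.add_sum_Ioc_eq_sum_Icc hn.le, ← Finset.sum_Ico_add_eq_sum_Icc hn.le, htop, add_zero]

lemma ded_add_mul_self (a n c : ℤ) : ded (a + n * c) n = ded a n := by
  rcases eq_or_ne n 0 with rfl | hn
  · simp
  refine Finset.sum_congr rfl fun k _ => ?_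
  rw [show ((a + n * c : ℤ) : ℝ) * k / n = a * k / n + ((c * k : ℤ) : ℝ) by
    push_cast; field_simp, saw_add_intCast]

lemma ded_neg (a n : ℤ) : ded (-a) n = -ded a n := by
  simp only [ded, ← Finset.sum_neg_distrib, Int.cast_neg, neg_mul, neg_div, saw_neg, mul_neg]

lemma natCast_card_Ico_zero {n : ℤ} (hn : 0 ≤ n) : ((Ico 0 n).card : ℝ) = n := by
  rw [Int.card_Ico, sub_zero, ← Int.cast_natCast, Int.toNat_of_nonneg hn]

lemma sum_Ico_intCast {n : ℤ} (hn : 0 ≤ n) : ∑ j ∈ Ico 0 n, (j : ℝ) = n * (n - 1) / 2 := by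
  induction n, hn using Int.leInduction with
  | base => simp
  | succ k hk ih => rw [← Finset.sum_Ico_add_eq_sum_Ico_add_one hk, ih]; push_cast; ring

lemma sum_Ico_intCast_sq {n : ℤ} (hn : 0 ≤ n) :
    ∑ j ∈ Ico 0 n, (j : ℝ) ^ 2 = n * (n - 1) * (2 * n - 1) / 6 := by
  induction n, hn using Int.leInduction with
  | base => simp
  | succ k hk ih => rw [← Finset.sum_Ico_add_eq_sum_Ico_add_one hk, ih]; push_cast; ring

lemma sum_Ico_mul_add_emod {M : Type*} [AddCommMonoid M] {p m : ℤ} (hm : IsCoprime m p) (k : ℤ)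
    (F : ℤ → M) : ∑ b ∈ Ico 0 p, F ((m * b + k) % p) = ∑ b ∈ Ico 0 p, F b := by
  rcases le_or_gt p 0 with hp | hp
  · simp [Finset.Ico_eq_empty_of_le hp]
  have hmaps : Set.MapsTo (fun b => (m * b + k) % p) (Ico 0 p) (Ico 0 p) := fun b _ => by
    simp [Int.emod_nonneg _ hp.ne', Int.emod_lt_of_pos _ hp]
  have hinj : Set.InjOn (fun b => (m * b + k) % p) (Ico 0 p) := by
    intro a ha b hb hab
    simp only [coe_Ico, Set.mem_Ico] at ha hb
    have hmod : m * a ≡ m * b [ZMOD p] := Int.ModEq.add_right_cancel' k hab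
    have hdvd : p ∣ b - a := hm.symm.dvd_of_dvd_mul_left (by simpa [mul_sub] using hmod.dvd)
    have hab' : a % p = b % p := Int.modEq_iff_dvd.mpr hdvd
    rwa [Int.emod_eq_of_lt ha.1 ha.2, Int.emod_eq_of_lt hb.1 hb.2] at hab'
  exact Finset.sum_nbij _ hmaps hinj
    (Finset.surjOn_of_injOn_of_card_le _ hmaps hinj le_rfl) fun _ _ => rfl

lemma sum_Ico_mul_eq_sum_sum {M : Type*} [AddCommMonoid M] {p : ℤ} (hp : 0 < p) (q : ℤ)
    (F : ℤ → M) : ∑ j ∈ Ico 0 (p * q), F j = ∑ a ∈ Ico 0 p, ∑ b ∈ Ico 0 q, F (a + p * b) := by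
  rw [← Finset.sum_product']
  refine Finset.sum_nbij' (fun j => (j % p, j / p)) (fun x => x.1 + p * x.2) ?_ ?_ ?_ ?_ ?_
  · intro j hj
    simp only [mem_Ico, mem_product] at hj ⊢
    exact ⟨⟨Int.emod_nonneg _ hp.ne', Int.emod_lt_of_pos _ hp⟩, Int.ediv_nonneg hj.1 hp.le,
      (Int.ediv_lt_iff_lt_mul hp).2 (by linarith)⟩
  · intro x hx
    simp only [mem_Ico, mem_product] at hx ⊢
    constructor <;> nlinarith
  · intro j _
    exact Int.emod_add_mul_ediv j p
  · intro x hx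
    simp only [mem_Ico, mem_product] at hx
    simp only [Int.add_mul_emod_self_left, Int.emod_eq_of_lt hx.1.1 hx.1.2,
      Int.add_mul_ediv_left _ _ hp.ne', Int.ediv_eq_zero_of_lt hx.1.1 hx.1.2, zero_add]
  · intro j _
    rw [Int.emod_add_mul_ediv j p]

lemma one_add_mul_mul_emod_sq {p a : ℤ} (hp : 0 < p) (ha : 0 ≤ a) (ha' : a < p) (m b : ℤ) :
    (1 + p * m) * (a + p * b) % p ^ 2 = a + p * ((m * a + b) % p) := by
  have hc := Int.emod_add_mul_ediv (m * a + b) p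
  rw [show (1 + p * m) * (a + p * b) =
      a + p * ((m * a + b) % p) + p ^ 2 * ((m * a + b) / p + m * b) by
    linear_combination (-p) * hc, Int.add_mul_emod_self_left]
  have hc0 : 0 ≤ (m * a + b) % p := Int.emod_nonneg _ hp.ne'
  have hc1 : (m * a + b) % p < p := Int.emod_lt_of_pos _ hp
  exact Int.emod_eq_of_lt (by positivity) (by nlinarith)

lemma ded_eq_sum_mul_emod {h n : ℤ} (hn : 0 < n) (hh : IsCoprime h n) :
    ded h n = (∑ j ∈ Ico 0 n, (j : ℝ) * ((h * j % n : ℤ) : ℝ)) / n ^ 2 - (n - 1) / 4 := by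
  have hterm : ∀ j ∈ Ico 0 n, saw (j / n) * saw (h * j / n) =
      j * ((h * j % n : ℤ) : ℝ) / n ^ 2 - j / (2 * n) - ((h * j % n : ℤ) : ℝ) / (2 * n) + 1 / 4 -
        if j = 0 then 1 / 4 else 0 := by
    intro j hj
    rw [mem_Ico] at hj
    rcases eq_or_ne j 0 with rfl | hj0
    · simp [saw_zero]
    have hjn : j % n ≠ 0 := by rw [Int.emod_eq_of_lt hj.1 hj.2]; exact hj0
    have hhjn : h * j % n ≠ 0 := fun hdvd => hjn <| Int.emod_eq_zero_of_dvd <|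
      hh.symm.dvd_of_dvd_mul_left (Int.dvd_of_emod_eq_zero hdvd)
    rw [← Int.cast_mul, saw_intCast_div hn, saw_intCast_div hn, if_neg hjn, if_neg hhjn,
      if_neg hj0, Int.emod_eq_of_lt hj.1 hj.2]
    field_simp
    ring
  have hperm : ∑ j ∈ Ico 0 n, ((h * j % n : ℤ) : ℝ) = ∑ j ∈ Ico 0 n, (j : ℝ) := by
    simpa using sum_Ico_mul_add_emod hh 0 (fun x : ℤ => (x : ℝ))
  rw [ded_eq_sum_Ico, Finset.sum_congr rfl hterm]
  simp only [Finset.sum_sub_distrib, Finset.sum_add_distrib, ← Finset.sum_div,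
    Finset.sum_ite_eq', Finset.sum_const, hperm, sum_Ico_intCast hn.le]
  rw [if_pos (by simp [hn]), nsmul_eq_mul, natCast_card_Ico_zero hn.le]
  field_simp
  ring

lemma sum_Ico_sq_mul_one_add_mul_emod {p m : ℤ} (hp : 0 < p) (hm : IsCoprime m p) :
    ∑ j ∈ Ico 0 (p ^ 2), (j : ℝ) * (((1 + p * m) * j % p ^ 2 : ℤ) : ℝ) =
      p * (p * (p - 1) * (2 * p - 1) / 6) + (2 * p + p ^ 2) * (p * (p - 1) / 2) ^ 2 := by
  have hrow : ∀ a, ∑ b ∈ Ico 0 p, (((m * a + b) % p : ℤ) : ℝ) = ∑ b ∈ Ico 0 p, (b : ℝ) :=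
    fun a => by simpa only [one_mul, add_comm] using
      sum_Ico_mul_add_emod (p := p) isCoprime_one_left (m * a) (fun x : ℤ => (x : ℝ))
  have hcol : ∀ b, ∑ a ∈ Ico 0 p, (((m * a + b) % p : ℤ) : ℝ) = ∑ a ∈ Ico 0 p, (a : ℝ) :=
    fun b => sum_Ico_mul_add_emod hm b (fun x : ℤ => (x : ℝ))
  have hinner : ∀ a ∈ Ico 0 p, ∑ b ∈ Ico 0 p,
      ((a + p * b : ℤ) : ℝ) * (((1 + p * m) * (a + p * b) % p ^ 2 : ℤ) : ℝ) =
      p * a ^ 2 + 2 * p * a * ∑ b ∈ Ico 0 p, (b : ℝ) +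
        p ^ 2 * ∑ b ∈ Ico 0 p, b * (((m * a + b) % p : ℤ) : ℝ) := by
    intro a ha
    rw [mem_Ico] at ha
    simp only [one_add_mul_mul_emod_sq hp ha.1 ha.2]
    push_cast
    simp only [mul_add, add_mul, Finset.sum_add_distrib, mul_assoc, mul_left_comm _ (p : ℝ),
      ← Finset.mul_sum, Finset.sum_const, nsmul_eq_mul, natCast_card_Ico_zero hp.le, hrow]
    rw [← Finset.sum_mul]
    ring
  rw [show Ico 0 (p ^ 2) = Ico 0 (p * p) by rw [sq], sum_Ico_mul_eq_sum_sum hp,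
    Finset.sum_congr rfl hinner]
  simp only [Finset.sum_add_distrib, ← Finset.mul_sum, ← Finset.sum_mul]
  rw [Finset.sum_comm]
  simp only [← Finset.mul_sum, hcol, ← Finset.sum_mul, sum_Ico_intCast hp.le,
    sum_Ico_intCast_sq hp.le]
  ring

lemma ded_one_add_mul_sq {p m : ℤ} (hp : 0 < p) (hm : IsCoprime m p) :
    ded (1 + p * m) (p ^ 2) = (1 - p ^ 2) / (6 * p ^ 2) := by
  have hcop : IsCoprime (1 + p * m) (p ^ 2) := IsCoprime.pow_right ⟨1, -m, by ring⟩
  rw [ded_eq_sum_mul_emod (by positivity) hcop, sum_Ico_sq_mul_one_add_mul_emod hp hm]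
  push_cast
  field_simp
  ring

lemma Prime.isCoprime_of_pos_of_lt {p m : ℤ} (hp : Prime p) (hm : 0 < m) (hmp : m < p) :
    IsCoprime m p :=
  (hp.coprime_iff_not_dvd.mpr fun h => (Int.le_of_dvd hm h).not_gt hmp).symm

theorem prime_square_equal_dedekind_sums (p : ℕ) (hp : p.Prime)
    (ε : ℤ) (hε : ε = 1 ∨ ε = -1) :
    ∀ m : ℤ, 1 ≤ m → m ≤ (p : ℤ) - 1 →
      Sded (ε + (p : ℤ) * m) ((p : ℤ) ^ 2) =
        (ε : ℝ) * (2 / (p : ℝ) ^ 2 - 2) := by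
  intro m hm1 hm2
  have hpZ : Prime (p : ℤ) := Nat.prime_iff_prime_int.mp hp
  have hp0 : (0 : ℤ) < p := by exact_mod_cast hp.pos
  have hp' : (p : ℝ) ≠ 0 := by exact_mod_cast hp.ne_zero
  rcases hε with rfl | rfl
  · rw [Sded, ded_one_add_mul_sq hp0 (hpZ.isCoprime_of_pos_of_lt (by omega) (by omega))]
    push_cast
    field_simp
    ring
  · rw [Sded, show -1 + (p : ℤ) * m = -(1 + p * (p - m)) + p ^ 2 * 1 by ring, ded_add_mul_self,
      ded_neg, ded_one_add_mul_sq hp0 (hpZ.isCoprime_of_pos_of_lt (by omega) (by omega))]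
    push_cast
    field_simp
    ring
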